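/- A modal formula φ is complete up to its depth for K if and only if the formula φ ∧ □^{md(φ)+1}⊥ is complete for K, where □^k denotes k nested applications of the □ operator. -/

import Mathlib

/-- Modal formulas in negation normal form, as in the paper:
φ ::= ⊥ | ⊤ | p | ¬p | φ∧φ | φ∨φ | □φ | ◇φ. -/
inductive Form : Type where
  | bot : Form
  | top : Form
  | pos : ℕ → Form
  | npos : ℕ → Form
  | and : Form → Form → Form
  | or : Form → Form → Form
  | box : Form → Form
  | dia : Form → Form
deriving DecidableEq

namespace Form

/-- Negation, defined as usual (by De Morgan dualities). -/
def neg : Form → Form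
  | bot => top
  | top => bot
  | pos p => npos p
  | npos p => pos p
  | and φ ψ => or φ.neg ψ.neg
  | or φ ψ => and φ.neg ψ.neg
  | box φ => dia φ.neg
  | dia φ => box φ.neg

/-- Implication φ → ψ, defined as usual. -/
def imp (φ ψ : Form) : Form := or φ.neg ψ

/-- Bi-implication φ ↔ ψ, defined as usual. -/
def biimp (φ ψ : Form) : Form := and (imp φ ψ) (imp ψ φ)

/-- P(φ): the set of propositional variables occurring in φ. -/
def vars : Form → Finset ℕ
  | bot => ∅
  | top => ∅
  | pos p => {p}
  | npos p => {p}
  | and φ ψ => φ.vars ∪ ψ.vars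
  | or φ ψ => φ.vars ∪ ψ.vars
  | box φ => φ.vars
  | dia φ => φ.vars

/-- Modal depth. -/
def md : Form → ℕ
  | bot => 0
  | top => 0
  | pos _ => 0
  | npos _ => 0
  | and φ ψ => max φ.md ψ.md
  | or φ ψ => max φ.md ψ.md
  | box φ => φ.md + 1
  | dia φ => φ.md + 1

/-- sub(φ): the set of subformulas of φ. -/
def subf : Form → Finset Form
  | bot => {bot}
  | top => {top}
  | pos p => {pos p}
  | npos p => {npos p}
  | and φ ψ => insert (and φ ψ) (φ.subf ∪ ψ.subf)
  | or φ ψ => insert (or φ ψ) (φ.subf ∪ ψ.subf)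
  | box φ => insert (box φ) φ.subf
  | dia φ => insert (dia φ) φ.subf

/-- s̄ub(φ) = sub(φ) ∪ {¬ψ : ψ ∈ sub(φ)}. -/
def subBar (φ : Form) : Finset Form := φ.subf ∪ φ.subf.image neg

/-- □^k φ : k nested boxes. -/
def boxIter : ℕ → Form → Form
  | 0, φ => φ
  | n + 1, φ => box (boxIter n φ)

def isDia : Form → Bool
  | dia _ => true
  | _ => false

def isBox : Form → Bool
  | box _ => true
  | _ => false

end Form

/-- Big conjunction over a finite set of formulas (⋀∅ = ⊤). -/
noncomputable def bigAnd (s : Finset Form) : Form := s.toList.foldr Form.and Form.top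

/-- Big disjunction over a finite set of formulas (⋁∅ = ⊥). -/
noncomputable def bigOr (s : Finset Form) : Form := s.toList.foldr Form.or Form.bot

/-- th(a) = ⋀ a. -/
noncomputable def th (a : Finset Form) : Form := bigAnd a

/-- A finite Kripke model: a nonempty finite set of states, an accessibility
relation and a valuation. -/
structure Model : Type 1 where
  W : Type
  nonempty : Nonempty W
  finite : Finite W
  R : W → W → Prop
  V : W → Set ℕ

/-- Satisfaction M,w ⊨ φ. -/
def Model.sat (M : Model) : M.W → Form → Prop
  | _, .bot => False
  | _, .top => True
  | w, .pos p => p ∈ M.V w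
  | w, .npos p => p ∉ M.V w
  | w, .and φ ψ => M.sat w φ ∧ M.sat w ψ
  | w, .or φ ψ => M.sat w φ ∨ M.sat w ψ
  | w, .box φ => ∀ v, M.R w v → M.sat v φ
  | w, .dia φ => ∃ v, M.R w v ∧ M.sat v φ

/-- The six base logics K, D, T, K4, KD4, S4. -/
inductive BaseLogic : Type where
  | K | D | T | K4 | KD4 | S4
deriving DecidableEq

/-- A logic: a base logic, possibly extended by axiom 5. -/
structure Logic : Type where
  base : BaseLogic
  has5 : Bool
deriving DecidableEq

def Logic.K : Logic := ⟨.K, false⟩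
def Logic.D : Logic := ⟨.D, false⟩
def Logic.T : Logic := ⟨.T, false⟩
def Logic.K4 : Logic := ⟨.K4, false⟩
def Logic.KD4 : Logic := ⟨.KD4, false⟩
def Logic.S4 : Logic := ⟨.S4, false⟩

/-- l + 5. -/
def BaseLogic.plus5 (b : BaseLogic) : Logic := ⟨b, true⟩

/-- M is a model for the logic l (frame conditions). -/
def Model.IsFor (M : Model) (l : Logic) : Prop :=
  (match l.base with
    | .K => True
    | .D => ∀ w, ∃ v, M.R w v
    | .T => ∀ w, M.R w w
    | .K4 => ∀ a b c, M.R a b → M.R b c → M.R a c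
    | .KD4 => (∀ w, ∃ v, M.R w v) ∧ (∀ a b c, M.R a b → M.R b c → M.R a c)
    | .S4 => (∀ w, M.R w w) ∧ (∀ a b c, M.R a b → M.R b c → M.R a c))
  ∧ (l.has5 = true → ∀ a b c, M.R a b → M.R a c → M.R b c)

/-- φ is satisfiable for l: satisfied at some state of some finite model for l. -/
def Satisfiable (l : Logic) (φ : Form) : Prop :=
  ∃ M : Model, M.IsFor l ∧ ∃ w : M.W, M.sat w φ

/-- φ is valid for l: satisfied at every state of every finite model for l. -/
def Valid (l : Logic) (φ : Form) : Prop :=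
  ∀ M : Model, M.IsFor l → ∀ w : M.W, M.sat w φ

/-- φ is complete for l: for every ψ ∈ L(P(φ)), φ→ψ or φ→¬ψ is valid for l. -/
def Complete (l : Logic) (φ : Form) : Prop :=
  ∀ ψ : Form, ψ.vars ⊆ φ.vars → (Valid l (φ.imp ψ) ∨ Valid l (φ.imp ψ.neg))

/-- Z is a bisimulation modulo P from M to M'. -/
def IsBisim (P : Set ℕ) (M M' : Model) (Z : M.W → M'.W → Prop) : Prop :=
  (∃ s s', Z s s') ∧
  ∀ s s', Z s s' →
    (M.V s ∩ P = M'.V s' ∩ P) ∧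
    (∀ t, M.R s t → ∃ t', M'.R s' t' ∧ Z t t') ∧
    (∀ t', M'.R s' t' → ∃ t, M.R s t ∧ Z t t')

/-- (M,a) ∼_P (M',a'). -/
def Bisimilar (P : Set ℕ) (M : Model) (a : M.W) (M' : Model) (a' : M'.W) : Prop :=
  ∃ Z, IsBisim P M M' Z ∧ Z a a'

/-- (M,a) ≡_P (M',a'): the two pointed models satisfy the same formulas of L(P). -/
def EquivP (P : Set ℕ) (M : Model) (a : M.W) (M' : Model) (a' : M'.W) : Prop :=
  ∀ φ : Form, ↑φ.vars ⊆ P → (M.sat a φ ↔ M'.sat a' φ)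

/-- (M,s) is flat (for base logic l, with axiom 5): the carrier is {s}∪W and
R = R1 ∪ R2 with R1 ⊆ {s}×W, R2 an equivalence relation on W, and s ∈ W if
l ∈ {T,S4}. -/
def Flat (l : BaseLogic) (M : Model) (s : M.W) : Prop :=
  ∃ W : Set M.W, (∀ w, w = s ∨ w ∈ W) ∧
    ∃ R1 R2 : M.W → M.W → Prop,
      (∀ x y, M.R x y ↔ (R1 x y ∨ R2 x y)) ∧
      (∀ x y, R1 x y → x = s ∧ y ∈ W) ∧
      (∀ x y, R2 x y → x ∈ W ∧ y ∈ W) ∧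
      (∀ x ∈ W, R2 x x) ∧
      (∀ x y, R2 x y → R2 y x) ∧
      (∀ x y z, R2 x y → R2 y z → R2 x z) ∧
      ((l = .T ∨ l = .S4) → s ∈ W)

/-- A maximal state for l with respect to φ: a maximally l-consistent subset
of s̄ub(φ). -/
def MaxState (l : Logic) (φ : Form) (a : Finset Form) : Prop :=
  a ⊆ φ.subBar ∧ Satisfiable l (th a) ∧ ∀ ψ ∈ φ.subf, ψ ∈ a ∨ ψ.neg ∈ a

/-- D(x) = {◇ψ : ◇ψ ∈ x}. -/
def DSet (x : Finset Form) : Finset Form := x.filter (fun ψ => ψ.isDia = true)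

/-- B(x) = {□ψ : □ψ ∈ x}. -/
def BSet (x : Finset Form) : Finset Form := x.filter (fun ψ => ψ.isBox = true)

/-- A view: a parent-state and a finite set of children-states. -/
structure View : Type where
  parent : Finset Form
  children : Finset (Finset Form)

/-- The view is with respect to φ: all its states are subsets of s̄ub(φ). -/
def View.WF (φ : Form) (S : View) : Prop :=
  S.parent ⊆ φ.subBar ∧ ∀ c ∈ S.children, c ⊆ φ.subBar

/-- A set of formulas is l-closed. -/
def LClosed (l : Logic) (P : Finset ℕ) (s : Finset Form) : Prop :=
  (∀ φ1 φ2 : Form, Form.and φ1 φ2 ∈ s → φ1 ∈ s ∧ φ2 ∈ s) ∧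
  (∀ φ1 φ2 : Form, Form.or φ1 φ2 ∈ s → φ1 ∈ s ∨ φ2 ∈ s) ∧
  ((l.base = .T ∨ l.base = .S4) → ∀ ψ : Form, Form.box ψ ∈ s → ψ ∈ s) ∧
  (∀ p ∈ P, Form.pos p ∈ s ∨ Form.npos p ∈ s)

/-- The view S is l-complete. -/
def ViewLComplete (l : Logic) (P : Finset ℕ) (S : View) : Prop :=
  LClosed l P S.parent ∧
  (∀ c ∈ S.children, LClosed l P c) ∧
  (∀ ψ : Form, Form.dia ψ ∈ S.parent → ∃ c ∈ S.children, ψ ∈ c) ∧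
  (∀ ψ : Form, Form.box ψ ∈ S.parent → ∀ c ∈ S.children, ψ ∈ c) ∧
  ((l.base = .K4 ∨ l.base = .KD4 ∨ l.base = .S4) →
    ∀ ψ : Form, Form.box ψ ∈ S.parent → ∀ c ∈ S.children, Form.box ψ ∈ c) ∧
  (l.base = .KD4 → S.children.Nonempty)

/-- The view S is consistent for l: every one of its states is consistent. -/
def ViewConsistent (l : Logic) (S : View) : Prop :=
  Satisfiable l (th S.parent) ∧ ∀ c ∈ S.children, Satisfiable l (th c)

/-- d = max{md(th(c')) : c' ∈ C(S)}. -/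
noncomputable def childDepth (S : View) : ℕ := S.children.sup (fun c => (th c).md)

/-- A K-maximal child-state: a maximally K-consistent subset of s̄ub_d(φ). -/
def KMaxChild (φ : Form) (d : ℕ) (c : Finset Form) : Prop :=
  c ⊆ φ.subBar.filter (fun ψ => ψ.md ≤ d) ∧
  Satisfiable Logic.K (th c) ∧
  ∀ ψ ∈ φ.subf, ψ.md ≤ d → (ψ ∈ c ∨ ψ.neg ∈ c)

/-- S' completes S (for logic l, with respect to φ). -/
def ViewCompletes (l : Logic) (φ : Form) (S' S : View) : Prop :=
  ViewLComplete l φ.vars S' ∧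
  S.parent ⊆ S'.parent ∧
  (∀ a ∈ S.children, ∃ a' ∈ S'.children, a ⊆ a') ∧
  (l.base = .K → ∀ a' ∈ S'.children, KMaxChild φ (childDepth S') a') ∧
  (l.base ≠ .K → ∀ a' ∈ S'.children, MaxState l φ a')

/-- The depth-0 normal form ⋀_{p∈S} p ∧ ⋀_{p∈P∖S} ¬p. -/
noncomputable def nf0 (P S : Finset ℕ) : Form :=
  Form.and (bigAnd (S.image Form.pos)) (bigAnd ((P \ S).image Form.npos))

/-- Fine's normal forms F_P^d. -/
noncomputable def NF (P : Finset ℕ) : ℕ → Set Form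
  | 0 => { χ | ∃ S ⊆ P, χ = nf0 P S }
  | d + 1 => { χ | ∃ S : Finset Form, ↑S ⊆ NF P d ∧ ∃ S0 ⊆ P,
      χ = Form.and (nf0 P S0)
            (Form.and (bigAnd (S.image Form.dia)) (Form.box (bigOr S))) }

/-- φ is complete up to its depth for l. -/
def CompleteUpToDepth (l : Logic) (φ : Form) : Prop :=
  ∀ ψ : Form, ψ.vars ⊆ φ.vars → ψ.md ≤ φ.md →
    (Valid l (φ.imp ψ) ∨ Valid l (φ.imp ψ.neg))

/-!
The formula `□^{d+1}⊥` says that every path from the current state has length at most `d`.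
Forward direction: in such a state every formula `ψ` is equivalent to its truncation at depth `d`
(boxes below depth `d` become `⊤`, diamonds `⊥`), a formula of depth at most `d`, to which the
completeness of `φ` up to its depth applies. Backward direction: unravelling a model into
`d + 1` levels, with the root on level `0`, preserves the truth of formulas of depth at most `d`
at the root and makes `□^{d+1}⊥` true there, so for such `ψ` the implication
`φ ∧ □^{d+1}⊥ → ψ` already forces `φ → ψ`.
-/

namespace Form

lemma md_neg (φ : Form) : φ.neg.md = φ.md := by
  induction φ <;> simp [neg, md, *]

lemma vars_boxIter_bot (k : ℕ) : (boxIter k bot).vars = ∅ := by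
  induction k <;> simp [boxIter, vars, *]

def truncate : ℕ → Form → Form
  | _, bot => bot
  | _, top => top
  | _, pos p => pos p
  | _, npos p => npos p
  | n, and a b => and (truncate n a) (truncate n b)
  | n, or a b => or (truncate n a) (truncate n b)
  | 0, box _ => top
  | n + 1, box a => box (truncate n a)
  | 0, dia _ => bot
  | n + 1, dia a => dia (truncate n a)

lemma md_truncate (n : ℕ) (ψ : Form) : (ψ.truncate n).md ≤ n := by
  induction ψ generalizing n with
  | box a ih | dia a ih => cases n <;> simp [truncate, md, ih]
  | _ => simp_all [truncate, md]

lemma vars_truncate_subset (n : ℕ) (ψ : Form) : (ψ.truncate n).vars ⊆ ψ.vars := by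
  induction ψ generalizing n with
  | and a b iha ihb | or a b iha ihb => exact Finset.union_subset_union (iha n) (ihb n)
  | box a ih | dia a ih => cases n <;> simp [truncate, vars, ih]
  | _ => simp [truncate]

lemma truncate_neg (n : ℕ) (ψ : Form) : ψ.neg.truncate n = (ψ.truncate n).neg := by
  induction ψ generalizing n with
  | box a ih | dia a ih => cases n <;> simp [truncate, neg, ih]
  | _ => simp_all [truncate, neg]

end Form

namespace Model

variable (M : Model)

lemma sat_neg (w : M.W) (φ : Form) : M.sat w φ.neg ↔ ¬ M.sat w φ := by
  induction φ generalizing w <;> simp [Form.neg, sat, not_or, imp_iff_not_or, *]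

lemma sat_imp (w : M.W) (φ ψ : Form) : M.sat w (φ.imp ψ) ↔ (M.sat w φ → M.sat w ψ) := by
  simp only [Form.imp, sat, sat_neg, imp_iff_not_or]

lemma sat_truncate_iff {n : ℕ} {w : M.W} (hw : M.sat w (Form.boxIter (n + 1) .bot))
    (ψ : Form) : M.sat w (ψ.truncate n) ↔ M.sat w ψ := by
  induction ψ generalizing n w with
  | and a b iha ihb | or a b iha ihb => simp only [Form.truncate, sat, iha hw, ihb hw]
  | box a ih =>
    cases n with
    | zero => exact iff_of_true trivial fun v hv => (hw v hv).elim
    | succ m => exact forall₂_congr fun v hv => ih (hw v hv)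
  | dia a ih =>
    cases n with
    | zero => exact iff_of_false id fun ⟨v, hv, _⟩ => hw v hv
    | succ m => exact exists_congr fun v => and_congr_right fun hv => ih (hw v hv)
  | _ => rfl

def levels (d : ℕ) : Model where
  W := M.W × Fin (d + 1)
  nonempty := ⟨(M.nonempty.some, 0)⟩
  finite := have := M.finite; inferInstance
  R a b := M.R a.1 b.1 ∧ (b.2 : ℕ) = a.2 + 1
  V a := M.V a.1

lemma levels_isFor_K (d : ℕ) : (M.levels d).IsFor Logic.K :=
  ⟨trivial, nofun⟩

lemma sat_levels_iff {d : ℕ} (χ : Form) (v : M.W) (i : Fin (d + 1)) (h : χ.md + i ≤ d) :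
    (M.levels d).sat (v, i) χ ↔ M.sat v χ := by
  induction χ generalizing v i with
  | and a b iha ihb | or a b iha ihb =>
    simp only [Form.md] at h
    simp only [sat, iha v i (by omega), ihb v i (by omega)]
  | box a ih =>
    simp only [Form.md] at h
    refine ⟨fun hs u hu => ?_,
      fun hs ⟨u, j⟩ ⟨hu, hj⟩ => (ih u j (by dsimp only at hj; omega)).2 (hs u hu)⟩
    exact (ih u ⟨i + 1, by omega⟩ (by simp; omega)).1 (hs (u, ⟨i + 1, by omega⟩) ⟨hu, rfl⟩)
  | dia a ih =>
    simp only [Form.md] at h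
    refine ⟨fun ⟨⟨u, j⟩, ⟨hu, hj⟩, hs⟩ => ⟨u, hu, (ih u j (by dsimp only at hj; omega)).1 hs⟩,
      fun ⟨u, hu, hs⟩ => ?_⟩
    exact ⟨(u, ⟨i + 1, by omega⟩), ⟨hu, rfl⟩, (ih u ⟨i + 1, by omega⟩ (by simp; omega)).2 hs⟩
  | _ => rfl

lemma sat_levels_boxIter_bot {d k : ℕ} (v : M.W) (i : Fin (d + 1)) (h : d < i + k) :
    (M.levels d).sat (v, i) (Form.boxIter k .bot) := by
  induction k generalizing v i with
  | zero => omega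
  | succ k ih => exact fun ⟨u, j⟩ ⟨_, hj⟩ => ih u j (by dsimp only at hj; omega)

end Model

lemma valid_imp_iff (l : Logic) (φ ψ : Form) :
    Valid l (φ.imp ψ) ↔ ∀ M : Model, M.IsFor l → ∀ w, M.sat w φ → M.sat w ψ := by
  simp only [Valid, Model.sat_imp]

lemma valid_and_boxIter_bot_imp {l : Logic} {φ : Form} {d : ℕ} (ψ : Form)
    (h : Valid l (φ.imp (ψ.truncate d))) :
    Valid l ((φ.and (Form.boxIter (d + 1) .bot)).imp ψ) := by
  rw [valid_imp_iff] at h ⊢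
  exact fun M hM w ⟨hφ, hbot⟩ => (M.sat_truncate_iff hbot ψ).1 (h M hM w hφ)

lemma valid_imp_of_valid_and_boxIter_bot_imp {φ ψ : Form} {d : ℕ} (hφ : φ.md ≤ d)
    (hψ : ψ.md ≤ d) (h : Valid Logic.K ((φ.and (Form.boxIter (d + 1) .bot)).imp ψ)) :
    Valid Logic.K (φ.imp ψ) := by
  rw [valid_imp_iff] at h ⊢
  intro M _ w hw
  have hroot := h (M.levels d) (M.levels_isFor_K d) (w, 0)
    ⟨(M.sat_levels_iff φ w 0 (by simpa)).2 hw, M.sat_levels_boxIter_bot w 0 (by simp)⟩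
  exact (M.sat_levels_iff ψ w 0 (by simpa)).1 hroot

/-- φ is complete up to its depth for K iff φ ∧ □^{md(φ)+1}⊥
is complete for K. -/
theorem stmt19 (φ : Form) :
    CompleteUpToDepth Logic.K φ ↔
    Complete Logic.K (Form.and φ (Form.boxIter (φ.md + 1) Form.bot)) := by
  simp only [Complete, Form.vars, Form.vars_boxIter_bot, Finset.union_empty]
  constructor
  · intro hφ ψ hψ
    rcases hφ (ψ.truncate φ.md) ((Form.vars_truncate_subset _ ψ).trans hψ)
      (Form.md_truncate _ ψ) with h | h
    · exact .inl (valid_and_boxIter_bot_imp ψ h)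
    · exact .inr (valid_and_boxIter_bot_imp ψ.neg (Form.truncate_neg _ ψ ▸ h))
  · intro hφ ψ hψ hmd
    rcases hφ ψ hψ with h | h
    · exact .inl (valid_imp_of_valid_and_boxIter_bot_imp le_rfl hmd h)
    · exact .inr (valid_imp_of_valid_and_boxIter_bot_imp le_rfl (ψ.md_neg ▸ hmd) h)
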